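/- Let Θ be a nonempty index set and (κ_θ)_{θ∈Θ} a family of Markov kernels on ℝ^d with nonlinear Markov operator P̄f(x) = sup_{θ∈Θ} ∫ f dκ_θ(x,·). Let Φ : [0,∞) → [0,∞) be strictly increasing and continuous with Φ(0) = 0, and let C : ℝ^d × ℝ^d → ℝ be such that e ↦ C(x,e) is Borel measurable for each x. Assume the shift Harnack inequality: Φ(P̄f(x)) ≤ P̄(Φ∘f(e+·))(x)·e^{C(x,e)} for all bounded Borel measurable f ≥ 0 and all x, e ∈ ℝ^d. Assume there is a countable subset Θ₀ ⊆ Θ and Borel functions g_θ : ℝ^d → (0,∞) for θ ∈ Θ₀ such that P̄f(x) ≤ sup_{θ∈Θ₀} ∫ g_θ(y) f(y) κ_θ(x,dy) for all bounded Borel measurable f ≥ 0 and x ∈ ℝ^d. Then for every Borel set A ⊆ ℝ^d of Lebesgue measure zero and every x ∈ ℝ^d one has P̄1_A(x) = 0; in particular, every kernel κ_θ(x,·) (θ ∈ Θ, x ∈ ℝ^d) is absolutely continuous with respect to Lebesgue measure, so P̄ admits a sup transition density with respect to Lebesgue measure. -/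

import Mathlib

open MeasureTheory ProbabilityTheory Filter

/-!
Fix a Lebesgue-null Borel set `A` and a point `x`. By Fubini, for each of the countably many
kernels `κ_θ(x, ·)`, `θ ∈ Θ₀`, almost every translate `A - e` is `κ_θ(x, ·)`-null, so a single
shift `e` makes `A - e` null for all of them at once. As `Φ ∘ 1_A(e + ·) = Φ(1) 1_{A - e}`,
domination gives `P̄ (Φ ∘ 1_A(e + ·))(x) = 0`, and the shift Harnack inequality forces
`Φ(P̄ 1_A(x)) ≤ 0`, i.e. `P̄ 1_A(x) = 0`. Since `κ_θ(x, A) ≤ P̄ 1_A(x)`, every kernel is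
absolutely continuous.
-/

/-- The nonlinear Markov operator `P̄ f x = ⨆ θ, ∫ f dκ_θ(x,·)` associated with a family
of Markov kernels on `ℝ^d`. -/
noncomputable def nlOp {d : ℕ} {Θ : Type*}
    (κ : Θ → Kernel (EuclideanSpace ℝ (Fin d)) (EuclideanSpace ℝ (Fin d)))
    (f : EuclideanSpace ℝ (Fin d) → ℝ) (x : EuclideanSpace ℝ (Fin d)) : ℝ :=
  ⨆ θ, ∫ y, f y ∂(κ θ x)

theorem ae_measure_preimage_add_eq_zero {G : Type*} [MeasurableSpace G] [AddGroup G]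
    [MeasurableAdd₂ G] (μ ν : Measure G) [SFinite μ] [SFinite ν] [ν.IsAddRightInvariant]
    {A : Set G} (hA : MeasurableSet A) (hA0 : ν A = 0) :
    ∀ᵐ e ∂ν, μ ((e + ·) ⁻¹' A) = 0 := by
  have hT : MeasurableSet {p : G × G | p.1 + p.2 ∈ A} := measurable_add hA
  refine (Measure.measure_prod_null hT).1 ?_
  rw [Measure.prod_apply_symm hT]
  have hsection (y : G) : ν ((· + y) ⁻¹' A) = 0 := (measure_preimage_add_right ν y A).trans hA0
  exact lintegral_eq_zero_of_ae_eq_zero (ae_of_all _ hsection)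

theorem exists_forall_measure_preimage_add_eq_zero {G ι : Type*} [MeasurableSpace G]
    [AddGroup G] [MeasurableAdd₂ G] {s : Set ι} (hs : s.Countable) (μ : ι → Measure G)
    [∀ i, SFinite (μ i)] (ν : Measure G) [SFinite ν] [ν.IsAddRightInvariant] [NeZero ν]
    {A : Set G} (hA : MeasurableSet A) (hA0 : ν A = 0) :
    ∃ e, ∀ i ∈ s, μ i ((e + ·) ⁻¹' A) = 0 :=
  ((ae_ball_iff hs).2 fun i _ => ae_measure_preimage_add_eq_zero (μ i) ν hA hA0).exists

theorem indicator_const_measurable_nonneg_bddAbove {α : Type*} [MeasurableSpace α]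
    {s : Set α} (hs : MeasurableSet s) {c : ℝ} (hc : 0 ≤ c) :
    Measurable (s.indicator fun _ => c) ∧ (∀ y, 0 ≤ s.indicator (fun _ => c) y) ∧
      ∃ M, ∀ y, s.indicator (fun _ => c) y ≤ M :=
  ⟨measurable_const.indicator hs, fun _ => Set.indicator_nonneg (fun _ _ => hc) _,
    c, fun _ => Set.indicator_le_self' (fun _ _ => hc) _⟩

section nlOp

variable {d : ℕ} {Θ : Type*} {κ : Θ → Kernel (EuclideanSpace ℝ (Fin d)) (EuclideanSpace ℝ (Fin d))}

theorem nlOp_nonneg {f : EuclideanSpace ℝ (Fin d) → ℝ} (hf : ∀ y, 0 ≤ f y)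
    (x : EuclideanSpace ℝ (Fin d)) : 0 ≤ nlOp κ f x :=
  Real.iSup_nonneg fun _ => integral_nonneg hf

theorem measureReal_le_nlOp_indicator [∀ θ, IsMarkovKernel (κ θ)]
    {A : Set (EuclideanSpace ℝ (Fin d))} (hA : MeasurableSet A) (θ : Θ)
    (x : EuclideanSpace ℝ (Fin d)) : (κ θ x).real A ≤ nlOp κ (A.indicator fun _ => 1) x := by
  have hintegral (θ' : Θ) : ∫ y, A.indicator (fun _ => (1 : ℝ)) y ∂(κ θ' x) = (κ θ' x).real A := by
    simp [integral_indicator_const _ hA]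
  simp only [nlOp, hintegral]
  exact le_ciSup ⟨1, Set.forall_mem_range.2 fun θ' => measureReal_le_one (μ := κ θ' x)⟩ θ

theorem absolutelyContinuous_of_nlOp_indicator_eq_zero [∀ θ, IsMarkovKernel (κ θ)]
    {μ : Measure (EuclideanSpace ℝ (Fin d))}
    (h : ∀ A, MeasurableSet A → μ A = 0 → ∀ x, nlOp κ (A.indicator fun _ => 1) x = 0)
    (θ : Θ) (x : EuclideanSpace ℝ (Fin d)) : κ θ x ≪ μ := by
  refine Measure.AbsolutelyContinuous.mk fun A hA hA0 => ?_
  have hle := measureReal_le_nlOp_indicator (κ := κ) hA θ x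
  rw [h A hA hA0 x] at hle
  exact (measureReal_eq_zero_iff).1 (le_antisymm hle measureReal_nonneg)

end nlOp

theorem stmt_7_general {d : ℕ} {Θ : Type*}
    (κ : Θ → Kernel (EuclideanSpace ℝ (Fin d)) (EuclideanSpace ℝ (Fin d)))
    (hκ : ∀ θ, IsMarkovKernel (κ θ))
    -- Φ strictly increasing continuous with Φ(0) = 0
    (Φ : ℝ → ℝ)
    (hΦmono : StrictMonoOn Φ (Set.Ici 0))
    (hΦ0 : Φ 0 = 0)
    (C : EuclideanSpace ℝ (Fin d) → EuclideanSpace ℝ (Fin d) → ℝ)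
    -- shift Harnack inequality
    (hShiftHarnack : ∀ f : EuclideanSpace ℝ (Fin d) → ℝ, Measurable f → (∀ y, 0 ≤ f y) →
      (∃ M, ∀ y, f y ≤ M) → ∀ x e,
      Φ (nlOp κ f x) ≤ nlOp κ (fun y => Φ (f (e + y))) x * Real.exp (C x e))
    -- countable domination with positive weights
    (Θ₀ : Set Θ) (hΘ₀ : Θ₀.Countable)
    (g : Θ → EuclideanSpace ℝ (Fin d) → ℝ)
    (hdom : ∀ f : EuclideanSpace ℝ (Fin d) → ℝ, Measurable f → (∀ y, 0 ≤ f y) →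
      (∃ M, ∀ y, f y ≤ M) → ∀ x,
      nlOp κ f x ≤ ⨆ θ : Θ₀, ∫ y, g θ y * f y ∂(κ θ x)) :
    (∀ A : Set (EuclideanSpace ℝ (Fin d)), MeasurableSet A → volume A = 0 →
      ∀ x, nlOp κ (A.indicator fun _ => (1:ℝ)) x = 0) ∧
    (∀ θ x, κ θ x ≪ volume) := by
  have := hκ
  have hΦ1 : 0 ≤ Φ 1 :=
    hΦ0 ▸ hΦmono.monotoneOn Set.self_mem_Ici (Set.mem_Ici.2 zero_le_one) zero_le_one
  have hnull : ∀ A : Set (EuclideanSpace ℝ (Fin d)), MeasurableSet A → volume A = 0 →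
      ∀ x, nlOp κ (A.indicator fun _ => (1:ℝ)) x = 0 := by
    intro A hA hA0 x
    obtain ⟨e, he⟩ := exists_forall_measure_preimage_add_eq_zero hΘ₀ (κ · x) volume hA hA0
    set S := (e + ·) ⁻¹' A
    have hshift : (fun y => Φ (A.indicator (fun _ => 1) (e + y))) = S.indicator fun _ => Φ 1 := by
      ext y
      by_cases h : e + y ∈ A <;> simp [S, h, hΦ0]
    have hshift_zero : nlOp κ (fun y => Φ (A.indicator (fun _ => 1) (e + y))) x ≤ 0 := by
      obtain ⟨hm, hnn, hbd⟩ :=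
        indicator_const_measurable_nonneg_bddAbove (hA.preimage (measurable_const_add e)) hΦ1
      rw [hshift]
      refine (hdom _ hm hnn hbd x).trans (Real.iSup_nonpos fun θ => (integral_eq_zero_of_ae ?_).le)
      filter_upwards [measure_eq_zero_iff_ae_notMem.1 (he θ θ.2)] with y hy
      rw [Set.indicator_of_notMem hy, mul_zero, Pi.zero_apply]
    obtain ⟨hm, hnn, hbd⟩ := indicator_const_measurable_nonneg_bddAbove hA zero_le_one
    have hΦ_le : Φ (nlOp κ (A.indicator fun _ => 1) x) ≤ Φ 0 := by
      grw [hShiftHarnack _ hm hnn hbd x e, hΦ0]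
      exact mul_nonpos_of_nonpos_of_nonneg hshift_zero (Real.exp_nonneg _)
    have hP_nonneg := nlOp_nonneg (κ := κ) hnn x
    exact le_antisymm ((hΦmono.le_iff_le hP_nonneg Set.self_mem_Ici).1 hΦ_le) hP_nonneg
  exact ⟨hnull, absolutelyContinuous_of_nlOp_indicator_eq_zero hnull⟩

theorem stmt_7 {d : ℕ} {Θ : Type*} [Nonempty Θ]
    (κ : Θ → Kernel (EuclideanSpace ℝ (Fin d)) (EuclideanSpace ℝ (Fin d)))
    (hκ : ∀ θ, IsMarkovKernel (κ θ))
    -- Φ strictly increasing continuous with Φ(0) = 0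
    (Φ : ℝ → ℝ)
    (hΦmono : StrictMonoOn Φ (Set.Ici 0))
    (hΦcont : ContinuousOn Φ (Set.Ici 0))
    (hΦ0 : Φ 0 = 0)
    (C : EuclideanSpace ℝ (Fin d) → EuclideanSpace ℝ (Fin d) → ℝ)
    (hCmeas : ∀ x, Measurable (C x))
    -- shift Harnack inequality
    (hShiftHarnack : ∀ f : EuclideanSpace ℝ (Fin d) → ℝ, Measurable f → (∀ y, 0 ≤ f y) →
      (∃ M, ∀ y, f y ≤ M) → ∀ x e,
      Φ (nlOp κ f x) ≤ nlOp κ (fun y => Φ (f (e + y))) x * Real.exp (C x e))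
    -- countable domination with positive weights
    (Θ₀ : Set Θ) (hΘ₀ : Θ₀.Countable) (hΘ₀ne : Θ₀.Nonempty)
    (g : Θ → EuclideanSpace ℝ (Fin d) → ℝ)
    (hgmeas : ∀ θ ∈ Θ₀, Measurable (g θ))
    (hgpos : ∀ θ ∈ Θ₀, ∀ y, 0 < g θ y)
    (hdom : ∀ f : EuclideanSpace ℝ (Fin d) → ℝ, Measurable f → (∀ y, 0 ≤ f y) →
      (∃ M, ∀ y, f y ≤ M) → ∀ x,
      nlOp κ f x ≤ ⨆ θ : Θ₀, ∫ y, g θ y * f y ∂(κ θ x)) :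
    (∀ A : Set (EuclideanSpace ℝ (Fin d)), MeasurableSet A → volume A = 0 →
      ∀ x, nlOp κ (A.indicator fun _ => (1:ℝ)) x = 0) ∧
    (∀ θ x, κ θ x ≪ volume) :=
  stmt_7_general κ hκ Φ hΦmono hΦ0 C hShiftHarnack Θ₀ hΘ₀ g hdom
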